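/- (Stationary point characterization in the coordinate-wise fit) Let p(x) = Σ_{n∈I₁} αₙ N(x; μₙ, Pₙ) and q(x) = Σ_{m∈I₂} βₘ N(x; mₘ, Sₘ) be finite Gaussian mixtures on ℝ^d with symmetric positive-definite covariances, fix n ∈ I₁, and let J(αₙ) = ISD(p‖q) as a function of αₙ with all other weights fixed. Then J'(αₙ) = 0 holds if and only if αₙ = (2π)^{d/2} (det(2Pₙ))^{1/2} [ Σ_{m∈I₂} βₘ N(μₙ; mₘ, Pₙ + Sₘ) − Σ_{n'≠n} α_{n'} N(μₙ; μ_{n'}, Pₙ + P_{n'}) ]. -/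

import Mathlib

open MeasureTheory Real Matrix Finset

/-- The multivariate Gaussian density
`N(x; μ, Σ) = ((2π)^d det Σ)^{-1/2} exp(-(1/2)(x-μ)ᵀ Σ⁻¹ (x-μ))` on `ℝ^d`. -/
noncomputable def gaussPDF (d : ℕ) (μ : Fin d → ℝ) (S : Matrix (Fin d) (Fin d) ℝ)
    (x : Fin d → ℝ) : ℝ :=
  (Real.sqrt ((2 * Real.pi) ^ d * S.det))⁻¹ *
    Real.exp (-(1 / 2) * ((x - μ) ⬝ᵥ (S⁻¹ *ᵥ (x - μ))))

/-- `J(αₙ) = ISD(p‖q)` regarded as a function of the single mixture weight `αₙ`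
of the `n`-th component of `p`, all other weights held fixed. -/
noncomputable def isdWeightFun (d : ℕ) (I₁ I₂ : Type*)
    [Fintype I₁] [Fintype I₂] [DecidableEq I₁]
    (α : I₁ → ℝ) (β : I₂ → ℝ)
    (μ : I₁ → Fin d → ℝ) (m : I₂ → Fin d → ℝ)
    (P : I₁ → Matrix (Fin d) (Fin d) ℝ) (S : I₂ → Matrix (Fin d) (Fin d) ℝ)
    (n : I₁) (t : ℝ) : ℝ :=
  ∫ x : Fin d → ℝ,
    ((∑ n', Function.update α n t n' * gaussPDF d (μ n') (P n') x)
      - ∑ m', β m' * gaussPDF d (m m') (S m') x) ^ 2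

/-! Since αₙ enters `p - q` affinely, `J(t) = ∫ (t g + h)²` with `g = N(·; μₙ, Pₙ)` and `h` the
rest of `p - q`, a quadratic in `t` with `J'(t) = 2 (t ‖g‖² + ⟨g, h⟩)`. Both inner products are
integrals of products of two Gaussian densities, and completing the square gives
`N(x; μ, A) N(x; ν, B) = N(μ; ν, A + B) N(x; c, (A⁻¹ + B⁻¹)⁻¹)`, so that
`∫ N(x; μ, A) N(x; ν, B) dx = N(μ; ν, A + B)`; in particular `‖g‖² = ((2π)^d det (2Pₙ))^{-1/2}`. -/

section ChangeOfVariables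

variable {ι : Type*} [Fintype ι] [DecidableEq ι] {R : Matrix ι ι ℝ}

lemma map_mulVec_volume (hR : IsUnit R.det) :
    Measure.map (R *ᵥ ·) (volume : Measure (ι → ℝ)) = ENNReal.ofReal |R.det|⁻¹ • volume := by
  have hdet : LinearMap.det (toLin' R) ≠ 0 := by rw [LinearMap.det_toLin']; exact hR.ne_zero
  rw [← abs_inv, ← LinearMap.det_toLin', ← Measure.map_linearMap_addHaar_eq_smul_addHaar _ hdet]
  rfl

noncomputable def mulVecMeasurableEquiv (hR : IsUnit R.det) : (ι → ℝ) ≃ᵐ (ι → ℝ) :=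
  (R.toLinearEquiv' (R.invertibleOfIsUnitDet hR)).toContinuousLinearEquiv.toHomeomorph
    |>.toMeasurableEquiv

lemma integral_comp_mulVec (hR : IsUnit R.det) (g : (ι → ℝ) → ℝ) :
    ∫ x, g (R *ᵥ x) = |R.det|⁻¹ * ∫ y, g y := by
  have h := integral_map_equiv (μ := volume) (mulVecMeasurableEquiv hR) g
  rw [show ⇑(mulVecMeasurableEquiv hR) = (R *ᵥ ·) from rfl, map_mulVec_volume hR,
    integral_smul_measure, ENNReal.toReal_ofReal (by positivity)] at h
  exact h.symm

lemma MeasureTheory.Integrable.comp_mulVec (hR : IsUnit R.det) {g : (ι → ℝ) → ℝ}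
    (hg : Integrable g) : Integrable (fun x ↦ g (R *ᵥ x)) := by
  have h := integrable_map_equiv (μ := volume) (mulVecMeasurableEquiv hR) g
  rw [show ⇑(mulVecMeasurableEquiv hR) = (R *ᵥ ·) from rfl, map_mulVec_volume hR] at h
  exact h.mp (hg.smul_measure ENNReal.ofReal_ne_top)

end ChangeOfVariables

lemma Matrix.PosDef.isSymm {ι : Type*} {C : Matrix ι ι ℝ} (hC : C.PosDef) : C.IsSymm :=
  isHermitian_iff_isSymm.mp hC.isHermitian

section Matrix

variable {ι : Type*} [Fintype ι]

lemma Matrix.IsSymm.dotProduct_mulVec_comm {C : Matrix ι ι ℝ} (hC : C.IsSymm) (u v : ι → ℝ) :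
    u ⬝ᵥ (C *ᵥ v) = v ⬝ᵥ (C *ᵥ u) := by
  rw [dotProduct_mulVec, ← mulVec_transpose, hC.eq, dotProduct_comm]

lemma dotProduct_transpose_mul_self_mulVec (R : Matrix ι ι ℝ) (x : ι → ℝ) :
    x ⬝ᵥ ((Rᵀ * R) *ᵥ x) = (R *ᵥ x) ⬝ᵥ (R *ᵥ x) := by
  rw [← mulVec_mulVec, dotProduct_mulVec, vecMul_transpose]

variable [DecidableEq ι] {A B : Matrix ι ι ℝ}

lemma Matrix.PosDef.isUnit_det (hA : A.PosDef) : IsUnit A.det :=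
  hA.det_pos.ne'.isUnit

open scoped MatrixOrder in
lemma Matrix.PosDef.exists_eq_transpose_mul_self (hA : A.PosDef) :
    ∃ R : Matrix ι ι ℝ, IsUnit R.det ∧ A = Rᵀ * R := by
  obtain ⟨R, hR, rfl⟩ :=
    CStarAlgebra.isStrictlyPositive_iff_eq_star_mul_self.mp hA.isStrictlyPositive
  exact ⟨R, (isUnit_iff_isUnit_det R).mp hR,
    by rw [star_eq_conjTranspose, conjTranspose_eq_transpose_of_trivial]⟩

lemma det_inv_add_inv_mul_det_add (hA : A.PosDef) (hB : B.PosDef) :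
    (A⁻¹ + B⁻¹).det * (A.det * B.det) = (A + B).det := by
  have h : A * (A⁻¹ + B⁻¹) * B = A + B := by
    rw [mul_add, add_mul, mul_nonsing_inv _ hA.isUnit_det, one_mul, mul_assoc,
      nonsing_inv_mul _ hB.isUnit_det, mul_one, add_comm]
  rw [← h, det_mul, det_mul]
  ring

/-- Completing the square: with `w = (A + B)⁻¹ (μ - ν)` and `y = x - μ + A w` one has
`x - μ = y - A w` and `x - ν = y + B w`, and the cross terms `∓ 2 y ⬝ w` cancel. -/
lemma quadForm_add_quadForm (hA : A.PosDef) (hB : B.PosDef) (μ ν x : ι → ℝ) :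
    (x - μ) ⬝ᵥ (A⁻¹ *ᵥ (x - μ)) + (x - ν) ⬝ᵥ (B⁻¹ *ᵥ (x - ν))
      = (x - (μ - A *ᵥ ((A + B)⁻¹ *ᵥ (μ - ν)))) ⬝ᵥ
          ((A⁻¹ + B⁻¹) *ᵥ (x - (μ - A *ᵥ ((A + B)⁻¹ *ᵥ (μ - ν)))))
        + (μ - ν) ⬝ᵥ ((A + B)⁻¹ *ᵥ (μ - ν)) := by
  set w := (A + B)⁻¹ *ᵥ (μ - ν)
  set y := x - (μ - A *ᵥ w)
  have hw : (A + B) *ᵥ w = μ - ν := by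
    rw [mulVec_mulVec, mul_nonsing_inv _ (hA.add hB).isUnit_det, one_mulVec]
  have hxμ : x - μ = y - A *ᵥ w := by simp only [y]; abel
  have hxν : x - ν = y + B *ᵥ w := by
    rw [← sub_add_sub_cancel x μ ν, hxμ, ← hw, add_mulVec]; abel
  have hAw : A⁻¹ *ᵥ (A *ᵥ w) = w := by
    rw [mulVec_mulVec, nonsing_inv_mul _ hA.isUnit_det, one_mulVec]
  have hBw : B⁻¹ *ᵥ (B *ᵥ w) = w := by
    rw [mulVec_mulVec, nonsing_inv_mul _ hB.isUnit_det, one_mulVec]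
  rw [hxμ, hxν, ← hw]
  simp only [mulVec_sub, mulVec_add, dotProduct_sub, dotProduct_add, sub_dotProduct,
    add_dotProduct, add_mulVec, hAw, hBw, hA.inv.isSymm.dotProduct_mulVec_comm (A *ᵥ w) y,
    hB.inv.isSymm.dotProduct_mulVec_comm (B *ᵥ w) y]
  ring

end Matrix

section GaussianIntegral

variable {ι : Type*} [Fintype ι]

lemma exp_neg_half_dotProduct_self (x : ι → ℝ) :
    exp (-(1 / 2) * (x ⬝ᵥ x)) = ∏ i, exp (-(1 / 2) * x i ^ 2) := by
  simp only [← Real.exp_sum, dotProduct, Finset.mul_sum, sq]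

lemma integrable_exp_neg_half_dotProduct_self :
    Integrable (fun x : ι → ℝ ↦ exp (-(1 / 2) * (x ⬝ᵥ x))) := by
  simp_rw [exp_neg_half_dotProduct_self]
  exact Integrable.fintype_prod (f := fun _ t ↦ exp (-(1 / 2) * t ^ 2))
    fun _ ↦ by simpa using integrable_exp_neg_mul_sq (by norm_num : (0 : ℝ) < 1 / 2)

lemma integral_exp_neg_half_dotProduct_self :
    ∫ x : ι → ℝ, exp (-(1 / 2) * (x ⬝ᵥ x)) = √((2 * π) ^ Fintype.card ι) := by
  have h1 : ∫ t : ℝ, exp (-(1 / 2) * t ^ 2) = √(2 * π) := by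
    rw [integral_gaussian]; congr 1; field_simp
  simp_rw [exp_neg_half_dotProduct_self]
  rw [volume_pi, integral_fintype_prod_eq_pow (f := fun t : ℝ ↦ exp (-(1 / 2) * t ^ 2)), h1,
    eq_comm, Real.sqrt_eq_iff_eq_sq (by positivity) (by positivity), ← pow_right_comm,
    Real.sq_sqrt (by positivity)]

variable [DecidableEq ι] {Q : Matrix ι ι ℝ}

lemma integrable_exp_neg_half_quadForm (hQ : Q.PosDef) (c : ι → ℝ) :
    Integrable (fun x ↦ exp (-(1 / 2) * ((x - c) ⬝ᵥ (Q *ᵥ (x - c))))) := by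
  obtain ⟨R, hR, rfl⟩ := hQ.exists_eq_transpose_mul_self
  simp_rw [dotProduct_transpose_mul_self_mulVec]
  exact (integrable_exp_neg_half_dotProduct_self.comp_mulVec hR).comp_sub_right c

lemma integral_exp_neg_half_quadForm (hQ : Q.PosDef) (c : ι → ℝ) :
    ∫ x, exp (-(1 / 2) * ((x - c) ⬝ᵥ (Q *ᵥ (x - c)))) = √((2 * π) ^ Fintype.card ι / Q.det) := by
  obtain ⟨R, hR, rfl⟩ := hQ.exists_eq_transpose_mul_self
  simp_rw [dotProduct_transpose_mul_self_mulVec]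
  rw [integral_sub_right_eq_self (fun x ↦ exp (-(1 / 2) * ((R *ᵥ x) ⬝ᵥ (R *ᵥ x)))) c,
    integral_comp_mulVec hR (fun y ↦ exp (-(1 / 2) * (y ⬝ᵥ y))),
    integral_exp_neg_half_dotProduct_self, det_mul, det_transpose,
    Real.sqrt_div' _ (mul_self_nonneg _), Real.sqrt_mul_self_eq_abs, inv_mul_eq_div]

end GaussianIntegral

section GaussPDF

variable {d : ℕ} {A B : Matrix (Fin d) (Fin d) ℝ}

lemma gaussPDF_self (μ : Fin d → ℝ) :
    gaussPDF d μ A μ = (√((2 * π) ^ d * A.det))⁻¹ := by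
  simp [gaussPDF]

lemma integrable_gaussPDF (hA : A.PosDef) (μ : Fin d → ℝ) : Integrable (gaussPDF d μ A) :=
  (integrable_exp_neg_half_quadForm hA.inv μ).const_mul _

lemma integral_gaussPDF (hA : A.PosDef) (μ : Fin d → ℝ) : ∫ x, gaussPDF d μ A x = 1 := by
  have hpos : 0 < (2 * π) ^ d * A.det := by have := hA.det_pos; positivity
  unfold gaussPDF
  rw [integral_const_mul, integral_exp_neg_half_quadForm hA.inv, det_nonsing_inv,
    Ring.inverse_eq_inv', Fintype.card_fin, div_inv_eq_mul, inv_mul_cancel₀ (by positivity)]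

lemma gaussPDF_mul_gaussPDF (hA : A.PosDef) (hB : B.PosDef) (μ ν x : Fin d → ℝ) :
    gaussPDF d μ A x * gaussPDF d ν B x
      = gaussPDF d ν (A + B) μ *
          gaussPDF d (μ - A *ᵥ ((A + B)⁻¹ *ᵥ (μ - ν))) (A⁻¹ + B⁻¹)⁻¹ x := by
  have hM : (A⁻¹ + B⁻¹).PosDef := hA.inv.add hB.inv
  have hdet : (2 * π) ^ d * A.det * ((2 * π) ^ d * B.det)
      = (2 * π) ^ d * (A + B).det * ((2 * π) ^ d * ((A⁻¹ + B⁻¹)⁻¹).det) := by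
    rw [det_nonsing_inv, Ring.inverse_eq_inv', ← det_inv_add_inv_mul_det_add hA hB]
    field_simp [hM.det_pos.ne']
  unfold gaussPDF
  rw [nonsing_inv_nonsing_inv _ hM.isUnit_det, mul_mul_mul_comm, mul_mul_mul_comm _ (exp _),
    ← mul_inv, ← mul_inv, ← Real.sqrt_mul (by have := hA.det_pos; positivity),
    ← Real.sqrt_mul (by have := (hA.add hB).det_pos; positivity), hdet, ← exp_add, ← exp_add]
  congr 2
  linear_combination (-(1 / 2) : ℝ) * quadForm_add_quadForm hA hB μ ν x

lemma integrable_gaussPDF_mul_gaussPDF (hA : A.PosDef) (hB : B.PosDef) (μ ν : Fin d → ℝ) :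
    Integrable (fun x ↦ gaussPDF d μ A x * gaussPDF d ν B x) := by
  simp_rw [gaussPDF_mul_gaussPDF hA hB]
  exact (integrable_gaussPDF (hA.inv.add hB.inv).inv _).const_mul _

lemma integral_gaussPDF_mul_gaussPDF (hA : A.PosDef) (hB : B.PosDef) (μ ν : Fin d → ℝ) :
    ∫ x, gaussPDF d μ A x * gaussPDF d ν B x = gaussPDF d ν (A + B) μ := by
  simp_rw [gaussPDF_mul_gaussPDF hA hB]
  rw [integral_const_mul, integral_gaussPDF (hA.inv.add hB.inv).inv, mul_one]

lemma memLp_two_gaussPDF (hA : A.PosDef) (μ : Fin d → ℝ) : MemLp (gaussPDF d μ A) 2 :=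
  (memLp_two_iff_integrable_sq (integrable_gaussPDF hA μ).aestronglyMeasurable).mpr
    (by simpa only [sq] using integrable_gaussPDF_mul_gaussPDF hA hA μ μ)

lemma integral_gaussPDF_mul_sum {ι : Type*} (s : Finset ι) (c : ι → ℝ) (ν : ι → Fin d → ℝ)
    {C : ι → Matrix (Fin d) (Fin d) ℝ} (hA : A.PosDef) (hC : ∀ i, (C i).PosDef) (μ : Fin d → ℝ) :
    ∫ x, gaussPDF d μ A x * ∑ i ∈ s, c i * gaussPDF d (ν i) (C i) x
      = ∑ i ∈ s, c i * gaussPDF d (ν i) (A + C i) μ := by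
  simp_rw [Finset.mul_sum, mul_left_comm (gaussPDF d μ A _)]
  rw [integral_finsetSum _ fun i _ ↦ (integrable_gaussPDF_mul_gaussPDF hA (hC i) _ _).const_mul _]
  simp_rw [integral_const_mul, integral_gaussPDF_mul_gaussPDF hA (hC _)]

lemma memLp_two_sum_gaussPDF {ι : Type*} (s : Finset ι) (c : ι → ℝ) (ν : ι → Fin d → ℝ)
    {C : ι → Matrix (Fin d) (Fin d) ℝ} (hC : ∀ i, (C i).PosDef) :
    MemLp (fun x ↦ ∑ i ∈ s, c i * gaussPDF d (ν i) (C i) x) 2 :=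
  memLp_finsetSum _ fun i _ ↦ (memLp_two_gaussPDF (hC i) _).const_mul _

lemma integral_gaussPDF_sq (hA : A.PosDef) (μ : Fin d → ℝ) :
    ∫ x, gaussPDF d μ A x ^ 2 = (√((2 * π) ^ d * ((2 : ℝ) • A).det))⁻¹ := by
  simp_rw [sq, two_smul, ← gaussPDF_self μ, integral_gaussPDF_mul_gaussPDF hA hA]

end GaussPDF

lemma hasDerivAt_integral_mul_add_sq {α : Type*} [MeasurableSpace α] {μ : Measure α}
    {g h : α → ℝ} (hg : MemLp g 2 μ) (hh : MemLp h 2 μ) (t : ℝ) :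
    HasDerivAt (fun s ↦ ∫ x, (s * g x + h x) ^ 2 ∂μ)
      (2 * (t * ∫ x, g x ^ 2 ∂μ + ∫ x, g x * h x ∂μ)) t := by
  have hgh : Integrable (fun x ↦ g x * h x) μ := hg.integrable_mul hh
  have hJ : (fun s ↦ ∫ x, (s * g x + h x) ^ 2 ∂μ)
      = fun s ↦ s ^ 2 * ∫ x, g x ^ 2 ∂μ + 2 * s * ∫ x, g x * h x ∂μ + ∫ x, h x ^ 2 ∂μ := by
    funext s
    have hsq : ∀ x, (s * g x + h x) ^ 2 = s ^ 2 * g x ^ 2 + 2 * s * (g x * h x) + h x ^ 2 :=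
      fun x ↦ by ring
    have i1 : Integrable (fun x ↦ s ^ 2 * g x ^ 2) μ := hg.integrable_sq.const_mul _
    have i2 : Integrable (fun x ↦ 2 * s * (g x * h x)) μ := hgh.const_mul _
    simp_rw [hsq]
    rw [integral_add (f := fun x ↦ s ^ 2 * g x ^ 2 + 2 * s * (g x * h x)) (i1.add i2)
      hh.integrable_sq, integral_add i1 i2, integral_const_mul, integral_const_mul]
  rw [hJ]
  refine ((((hasDerivAt_pow 2 t).mul_const _).add
    (((hasDerivAt_id' t).const_mul 2).mul_const _)).add_const _).congr_deriv ?_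
  ring

lemma isdWeightFun_eq_integral_mul_add_sq (d : ℕ) (I₁ I₂ : Type*) [Fintype I₁] [Fintype I₂] [DecidableEq I₁]
    (α : I₁ → ℝ) (β : I₂ → ℝ) (μ : I₁ → Fin d → ℝ) (m : I₂ → Fin d → ℝ)
    (P : I₁ → Matrix (Fin d) (Fin d) ℝ) (S : I₂ → Matrix (Fin d) (Fin d) ℝ) (n : I₁) :
    isdWeightFun d I₁ I₂ α β μ m P S n = fun t ↦ ∫ x, (t * gaussPDF d (μ n) (P n) x
      + (∑ n' ∈ univ.erase n, α n' * gaussPDF d (μ n') (P n') x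
        - ∑ m', β m' * gaussPDF d (m m') (S m') x)) ^ 2 := by
  funext t
  refine integral_congr_ae (ae_of_all _ fun x ↦ ?_)
  dsimp only
  rw [← add_sum_erase _ _ (mem_univ n), Function.update_self,
    sum_congr rfl fun n' hn' ↦ by rw [Function.update_of_ne (ne_of_mem_erase hn')]]
  ring

/-- (Stationary point characterization in the coordinate-wise fit) `J'(αₙ) = 0`
holds if and only if
`αₙ = (2π)^{d/2} (det(2Pₙ))^{1/2} [ Σₘ βₘ N(μₙ; mₘ, Pₙ+Sₘ) − Σ_{n'≠n} α_{n'} N(μₙ; μ_{n'}, Pₙ+P_{n'}) ]`. -/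
theorem isd_single_weight_stationary_iff (d : ℕ) (I₁ I₂ : Type*)
    [Fintype I₁] [Fintype I₂] [DecidableEq I₁]
    (α : I₁ → ℝ) (β : I₂ → ℝ)
    (μ : I₁ → Fin d → ℝ) (m : I₂ → Fin d → ℝ)
    (P : I₁ → Matrix (Fin d) (Fin d) ℝ) (S : I₂ → Matrix (Fin d) (Fin d) ℝ)
    (hP : ∀ n, (P n).PosDef) (hS : ∀ m', (S m').PosDef) (n : I₁) (a : ℝ) :
    deriv (isdWeightFun d I₁ I₂ α β μ m P S n) a = 0
      ↔ a = Real.sqrt ((2 * Real.pi) ^ d * ((2 : ℝ) • P n).det) *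
          ((∑ m', β m' * gaussPDF d (m m') (P n + S m') (μ n))
            - ∑ n' ∈ Finset.univ.erase n, α n' * gaussPDF d (μ n') (P n + P n') (μ n)) := by
  rw [isdWeightFun_eq_integral_mul_add_sq]
  set g := gaussPDF d (μ n) (P n)
  set p' := fun x ↦ ∑ n' ∈ univ.erase n, α n' * gaussPDF d (μ n') (P n') x
  set q := fun x ↦ ∑ m', β m' * gaussPDF d (m m') (S m') x
  have hg : MemLp g 2 := memLp_two_gaussPDF (hP n) _
  have hp' : MemLp p' 2 := memLp_two_sum_gaussPDF _ _ _ hP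
  have hq : MemLp q 2 := memLp_two_sum_gaussPDF _ _ _ hS
  have hgh : ∫ x, g x * (p' x - q x)
      = ∑ n' ∈ univ.erase n, α n' * gaussPDF d (μ n') (P n + P n') (μ n)
        - ∑ m', β m' * gaussPDF d (m m') (P n + S m') (μ n) := by
    simp_rw [mul_sub]
    rw [integral_sub (f := fun x ↦ g x * p' x) (g := fun x ↦ g x * q x)
        (hg.integrable_mul hp') (hg.integrable_mul hq),
      integral_gaussPDF_mul_sum _ _ _ (hP n) hP, integral_gaussPDF_mul_sum _ _ _ (hP n) hS]
  have hK : 0 < √((2 * π) ^ d * ((2 : ℝ) • P n).det) := by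
    have := ((hP n).add (hP n)).det_pos
    rw [two_smul]; positivity
  rw [(hasDerivAt_integral_mul_add_sq (h := fun x ↦ p' x - q x) hg (hp'.sub hq) a).deriv,
    integral_gaussPDF_sq (hP n), hgh]
  field_simp
  constructor <;> intro h <;> linarith
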